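/- arXiv:1903.02813 — 2 statements merged into one kernel-verified Lean document; each statement's English description precedes it below -/
import Mathlib

section
/- For all real numbers a < b < c, the operators on the Fock space 𝓕 satisfy the join relations E_{[a,c)} = t·E_{[a,b)} ∘ E_{[b,c)} − t⁻¹·E_{[b,c)} ∘ E_{[a,b)} and F_{[a,c)} = t⁻¹·F_{[b,c)} ∘ F_{[a,b)} − t·F_{[a,b)} ∘ F_{[b,c)} as K-linear endomorphisms of 𝓕. -/
noncomputable section
open Function
open scoped Classical

/-- The `ℕ`-valued indicator function of the interval `[a, b)`. -/
def ind (a b : ℝ) : ℝ → ℕ := (Set.Ico a b).indicator fun _ => 1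

/-- A real pyramid: a function `p : ℝ → ℕ` vanishing outside a bounded set, maximal at `0`,
nondecreasing on `(-∞, 0]`, nonincreasing on `[0, ∞)`, right-continuous and piecewise
constant with finitely many discontinuities, and with jumps of size at most 1
(`p₋(x)` is the left limit of `p` at `x`). -/
def IsRealPyramid (p : ℝ → ℕ) : Prop :=
  (∃ M : ℝ, ∀ x : ℝ, M ≤ |x| → p x = 0) ∧
  (∀ x, p x ≤ p 0) ∧
  (∀ ⦃x y : ℝ⦄, x ≤ y → y ≤ 0 → p x ≤ p y) ∧
  (∀ ⦃x y : ℝ⦄, 0 ≤ x → x ≤ y → p y ≤ p x) ∧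
  (∀ x, ContinuousWithinAt p (Set.Ici x) x) ∧
  {x : ℝ | ¬ ContinuousAt p x}.Finite ∧
  (∀ x, |(p x : ℤ) - ((Function.leftLim p x : ℕ) : ℤ)| ≤ 1)

/-- The interval `[a, b)` is addable for `p` if `p + 1_{[a,b)}` is again a real pyramid. -/
def Addable (p : ℝ → ℕ) (a b : ℝ) : Prop := IsRealPyramid (fun x => p x + ind a b x)

/-- The interval `[a, b)` is removable for `p` if `p ≥ 1` on `[a, b)` and `p − 1_{[a,b)}`
is again a real pyramid. -/
def Removable (p : ℝ → ℕ) (a b : ℝ) : Prop :=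
  (∀ x ∈ Set.Ico a b, 1 ≤ p x) ∧ IsRealPyramid (fun x => p x - ind a b x)

/-- `n_J(p)`: `1` if `J = [a,b)` is addable for `p`, `−1` if removable, `0` otherwise. -/
def nJ (p : ℝ → ℕ) (a b : ℝ) : ℤ :=
  if Addable p a b then 1 else if Removable p a b then -1 else 0

/-- The base field `K = ℚ(t)`. -/
abbrev K : Type := RatFunc ℚ

/-- The variable `t ∈ K` (playing the role of `υ^{1/2}`). -/
def tK : K := RatFunc.X

/-- The quantum parameter `v := t²`. -/
def vK : K := tK ^ 2

/-- The type of real pyramids. -/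
def Pyr : Type := {p : ℝ → ℕ // IsRealPyramid p}

/-- The Fock space: the `K`-vector space with basis `|p⟩` indexed by real pyramids. -/
abbrev Fock : Type := Pyr →₀ K

/-- `E_J |p⟩ = −t·(−v)^{p(b)−p(a)} |p − 1_J⟩` if `J = [a,b)` is removable for `p`,
and `0` otherwise. -/
def Evec (a b : ℝ) (p : Pyr) : Fock :=
  if h : Removable p.1 a b then
    Finsupp.single ⟨fun x => p.1 x - ind a b x, h.2⟩
      (-tK * (-vK) ^ ((p.1 b : ℤ) - (p.1 a : ℤ)))
  else 0

/-- `F_J |p⟩ = t·(−v)^{p(a)−p(b)} |p + 1_J⟩` if `J = [a,b)` is addable for `p`,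
and `0` otherwise. -/
def Fvec (a b : ℝ) (p : Pyr) : Fock :=
  if h : Addable p.1 a b then
    Finsupp.single ⟨fun x => p.1 x + ind a b x, h⟩
      (tK * (-vK) ^ ((p.1 a : ℤ) - (p.1 b : ℤ)))
  else 0

/-- The `K`-linear operator `E_J` on the Fock space. -/
def Eop (a b : ℝ) : Fock →ₗ[K] Fock :=
  Finsupp.lsum K fun p => LinearMap.toSpanSingleton K Fock (Evec a b p)

/-- The `K`-linear operator `F_J` on the Fock space. -/
def Fop (a b : ℝ) : Fock →ₗ[K] Fock :=
  Finsupp.lsum K fun p => LinearMap.toSpanSingleton K Fock (Fvec a b p)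

/-- The `K`-linear operator `K_J` on the Fock space: `K_J |p⟩ = v^{n_J(p)} |p⟩`. -/
def Kop (a b : ℝ) : Fock →ₗ[K] Fock :=
  Finsupp.lsum K fun p =>
    LinearMap.toSpanSingleton K Fock (Finsupp.single p (vK ^ (nJ p.1 a b)))

/-- The `K`-linear operator `K_J⁻¹` on the Fock space: `K_J⁻¹ |p⟩ = v^{−n_J(p)} |p⟩`. -/
def Kinvop (a b : ℝ) : Fock →ₗ[K] Fock :=
  Finsupp.lsum K fun p =>
    LinearMap.toSpanSingleton K Fock (Finsupp.single p (vK ^ (-nJ p.1 a b)))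


/-!
The jump `p x - p₋ x` of a real pyramid is `0` or `1` at `x ≤ 0` and `0` or `-1` at `x > 0`;
`maxJump x` is the larger of the two values. Adding `1_{[x,y)}` raises the jump at `x`, lowers
the jump at `y` by one and changes no other jump, so `[x,y)` is addable exactly when the jump at
`x` is `maxJump x - 1` and the one at `y` is `maxJump y`, and removable in the opposite situation
(positivity on `[x,y)` then comes for free). Hence, for `a < b < c`, `[a,c)` can be removed
from (added to) `p` iff this can be done in two steps through `b`, the jump of `p` at `b` decides
in which order, and the composite in the other order vanishes. What is left is a comparison of
coefficients, a computation with powers of `t` and `-v = -t²`.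
-/

open Filter Topology Set

theorem continuousWithinAt_iff_eventually_eq {X Y : Type*} [TopologicalSpace X]
    [TopologicalSpace Y] [DiscreteTopology Y] {f : X → Y} {s : Set X} {x : X} :
    ContinuousWithinAt f s x ↔ ∀ᶠ z in 𝓝[s] x, f z = f x := by
  rw [ContinuousWithinAt, nhds_discrete Y, tendsto_pure]

theorem continuousAt_iff_eventually_eq {X Y : Type*} [TopologicalSpace X]
    [TopologicalSpace Y] [DiscreteTopology Y] {f : X → Y} {x : X} :
    ContinuousAt f x ↔ ∀ᶠ z in 𝓝 x, f z = f x := by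
  rw [ContinuousAt, nhds_discrete Y, tendsto_pure]

section DiscreteValued

variable {α β γ : Type*} [TopologicalSpace α] [DiscreteTopology α] [TopologicalSpace β]
  [DiscreteTopology β] [TopologicalSpace γ] {f : ℝ → α} {g : ℝ → β}

theorem eventually_nhdsLT_eq_leftLim (hf : {x | ¬ ContinuousAt f x}.Finite) (x : ℝ) :
    ∀ᶠ z in 𝓝[<] x, f z = leftLim f x := by
  have hcont : ∀ᶠ z in 𝓝[<] x, ContinuousAt f z := by
    filter_upwards [nhdsWithin_le_nhds ((hf.sdiff (t := {x})).isClosed.compl_mem_nhds (by simp)),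
      self_mem_nhdsWithin] with z hz (hzx : z < x)
    simp only [mem_compl_iff, Set.mem_sdiff, mem_singleton_iff, not_and, not_not] at hz
    by_contra hc
    exact hzx.ne (hz hc)
  obtain ⟨l, hlx : l < x, hl⟩ := mem_nhdsLT_iff_exists_Ioo_subset.mp hcont
  have hm : (l + x) / 2 ∈ Ioo l x := ⟨by linarith, by linarith⟩
  have hconst : ∀ᶠ z in 𝓝[<] x, f z = f ((l + x) / 2) :=
    mem_of_superset (Ioo_mem_nhdsLT hlx) fun z hz =>
      isPreconnected_Ioo.constant (fun w hw => (hl hw).continuousWithinAt) hz hm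
  rwa [leftLim_eq_of_tendsto (tendsto_const_nhds.congr' (hconst.mono fun z hz => hz.symm))]

theorem leftLim_comp₂ [T2Space γ] (hf : {x | ¬ ContinuousAt f x}.Finite)
    (hg : {x | ¬ ContinuousAt g x}.Finite) (op : α → β → γ) (x : ℝ) :
    leftLim (fun z => op (f z) (g z)) x = op (leftLim f x) (leftLim g x) :=
  leftLim_eq_of_tendsto <| tendsto_const_nhds.congr' <|
    ((eventually_nhdsLT_eq_leftLim hf x).and (eventually_nhdsLT_eq_leftLim hg x)).mono
      fun z hz => by simp only [hz.1, hz.2]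

theorem continuousWithinAt_comp₂ {s : Set ℝ} {x : ℝ} (hf : ContinuousWithinAt f s x)
    (hg : ContinuousWithinAt g s x) (op : α → β → γ) :
    ContinuousWithinAt (fun z => op (f z) (g z)) s x :=
  (continuous_of_discreteTopology (f := fun q : α × β => op q.1 q.2)).continuousAt
    |>.comp_continuousWithinAt (hf.prodMk hg)

theorem finite_discontinuities_comp₂ (hf : {x | ¬ ContinuousAt f x}.Finite)
    (hg : {x | ¬ ContinuousAt g x}.Finite) (op : α → β → γ) :
    {x | ¬ ContinuousAt (fun z => op (f z) (g z)) x}.Finite :=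
  (hf.union hg).subset fun x hx => by
    by_contra hc
    simp only [mem_union, mem_ofPred_eq, not_or, not_not] at hc
    exact hx <| (continuous_of_discreteTopology (f := fun q : α × β => op q.1 q.2)).continuousAt
      |>.comp (hc.1.prodMk hc.2)

end DiscreteValued

def jump (f : ℝ → ℕ) (x : ℝ) : ℤ := f x - leftLim f x

def maxJump (x : ℝ) : ℤ := if x ≤ 0 then 1 else 0

theorem jump_add {f g : ℝ → ℕ} (hf : {x | ¬ ContinuousAt f x}.Finite)
    (hg : {x | ¬ ContinuousAt g x}.Finite) (x : ℝ) :
    jump (fun z => f z + g z) x = jump f x + jump g x := by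
  simp only [jump, leftLim_comp₂ hf hg (· + ·)]
  push_cast
  ring

section Interval

variable {a b c x z w : ℝ}

theorem ind_apply (a b z : ℝ) : ind a b z = if a ≤ z ∧ z < b then 1 else 0 := by
  simp [ind, indicator_apply]

theorem ind_add_ind (hab : a ≤ b) (hbc : b ≤ c) (z : ℝ) :
    ind a b z + ind b c z = ind a c z := by
  simp only [ind_apply]
  split_ifs <;> grind

theorem ind_self_left (hab : a < b) : ind a b a = 1 := by
  simp [ind_apply, hab]

theorem ind_self_right (a b : ℝ) : ind a b b = 0 := by
  simp [ind_apply]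

theorem ind_of_lt (hza : z < a) : ind a b z = 0 := by
  simp [ind_apply, hza.not_ge]

theorem ind_of_le (hbz : b ≤ z) : ind a b z = 0 := by
  simp [ind_apply, hbz.not_gt]

theorem ind_le_one (a b z : ℝ) : ind a b z ≤ 1 := by
  rw [ind_apply]
  split_ifs <;> simp

theorem ind_le_ind_or (hzw : z ≤ w) : ind a b z ≤ ind a b w ∨ z ∈ Ico a b ∧ b ≤ w := by
  simp only [ind_apply, mem_Ico]
  split_ifs <;> grind

theorem ind_le_ind_or' (hzw : z ≤ w) : ind a b w ≤ ind a b z ∨ z < a ∧ w ∈ Ico a b := by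
  simp only [ind_apply, mem_Ico]
  split_ifs <;> grind

theorem ind_eq_zero_of_abs_ge (hz : |a| + |b| + 1 ≤ |z|) : ind a b z = 0 := by
  rw [ind_apply, if_neg]
  rintro ⟨haz, hzb⟩
  have : |z| ≤ |a| + |b| := abs_le.mpr
    ⟨by linarith [neg_abs_le a, abs_nonneg b], by linarith [le_abs_self b, abs_nonneg a]⟩
  linarith

theorem eventually_nhdsGE_le_iff (a x : ℝ) : ∀ᶠ z in 𝓝[≥] x, (a ≤ z ↔ a ≤ x) := by
  rcases le_or_gt a x with h | h
  · filter_upwards [self_mem_nhdsWithin] with z (hz : x ≤ z)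
    exact iff_of_true (h.trans hz) h
  · filter_upwards [nhdsWithin_le_nhds (Iio_mem_nhds h)] with z (hz : z < a)
    exact iff_of_false hz.not_ge h.not_ge

theorem eventually_nhdsLT_le_iff (a x : ℝ) : ∀ᶠ z in 𝓝[<] x, (a ≤ z ↔ a < x) := by
  rcases lt_or_ge a x with h | h
  · filter_upwards [nhdsWithin_le_nhds (Ioi_mem_nhds h)] with z (hz : a < z)
    exact iff_of_true hz.le h
  · filter_upwards [self_mem_nhdsWithin] with z (hz : z < x)
    exact iff_of_false (hz.trans_le h).not_ge h.not_gt

theorem eventually_nhds_le_iff (h : x ≠ a) : ∀ᶠ z in 𝓝 x, (a ≤ z ↔ a ≤ x) := by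
  rcases h.lt_or_gt with h | h
  · filter_upwards [Iio_mem_nhds h] with z (hz : z < a)
    exact iff_of_false hz.not_ge h.not_ge
  · filter_upwards [Ioi_mem_nhds h] with z (hz : a < z)
    exact iff_of_true hz.le h.le

theorem continuousWithinAt_ind (a b x : ℝ) : ContinuousWithinAt (ind a b) (Ici x) x := by
  rw [continuousWithinAt_iff_eventually_eq]
  filter_upwards [eventually_nhdsGE_le_iff a x, eventually_nhdsGE_le_iff b x] with z ha hb
  simp only [ind_apply, ← not_le, ha, hb]

theorem finite_discontinuities_ind (a b : ℝ) : {x | ¬ ContinuousAt (ind a b) x}.Finite := by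
  refine (toFinite {a, b}).subset fun x hx => ?_
  by_contra hab
  simp only [mem_insert_iff, mem_singleton_iff, not_or] at hab
  refine hx (continuousAt_iff_eventually_eq.mpr ?_)
  filter_upwards [eventually_nhds_le_iff hab.1, eventually_nhds_le_iff hab.2] with z ha hb
  simp only [ind_apply, ← not_le, ha, hb]

theorem jump_ind (hab : a < b) (x : ℝ) :
    jump (ind a b) x = (if x = a then 1 else 0) - if x = b then 1 else 0 := by
  have hL : leftLim (ind a b) x = if a < x ∧ ¬ b < x then 1 else 0 := by
    refine leftLim_eq_of_tendsto (tendsto_const_nhds.congr' ?_)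
    filter_upwards [eventually_nhdsLT_le_iff a x, eventually_nhdsLT_le_iff b x] with z ha hb
    simp only [ind_apply, ← not_le, ha, hb]
  rw [jump, hL, ind_apply]
  split_ifs <;> grind

end Interval

namespace IsRealPyramid

variable {p : ℝ → ℕ} {x y z : ℝ}

theorem mono (hp : IsRealPyramid p) ⦃z w : ℝ⦄ (hzw : z ≤ w) (hw : w ≤ 0) : p z ≤ p w :=
  hp.2.2.1 hzw hw

theorem anti (hp : IsRealPyramid p) ⦃z w : ℝ⦄ (hz : 0 ≤ z) (hzw : z ≤ w) : p w ≤ p z :=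
  hp.2.2.2.1 hz hzw

theorem finite_discontinuities (hp : IsRealPyramid p) : {x | ¬ ContinuousAt p x}.Finite :=
  hp.2.2.2.2.2.1

theorem exists_eq_leftLim (hp : IsRealPyramid p) (hzx : z < x) :
    ∃ w ∈ Ioo z x, p w = leftLim p x :=
  ((eventually_nhdsLT_eq_leftLim hp.finite_discontinuities x).and
    (Ioo_mem_nhdsLT hzx)).exists.imp fun _ hw => ⟨hw.2, hw.1⟩

theorem jump_eq_maxJump_or (hp : IsRealPyramid p) (x : ℝ) :
    jump p x = maxJump x ∨ jump p x = maxJump x - 1 := by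
  have hbound := abs_le.mp (hp.2.2.2.2.2.2 x)
  unfold jump maxJump at *
  split_ifs with hx
  · obtain ⟨w, hw, hpw⟩ := hp.exists_eq_leftLim (sub_one_lt x)
    have := hp.mono hw.2.le hx
    omega
  · obtain ⟨w, hw, hpw⟩ := hp.exists_eq_leftLim (not_le.mp hx)
    have := hp.anti hw.1.le hw.2.le
    omega

theorem lt_of_jump_eq_maxJump (hp : IsRealPyramid p) (hzx : z < x) (hx : x ≤ 0)
    (h : jump p x = maxJump x) : p z < p x := by
  obtain ⟨w, hw, hpw⟩ := hp.exists_eq_leftLim hzx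
  have := hp.mono hw.1.le (hw.2.le.trans hx)
  simp only [jump, maxJump, if_pos hx] at h
  omega

theorem lt_of_jump_eq_maxJump_sub_one (hp : IsRealPyramid p) (hz : 0 ≤ z) (hzx : z < x)
    (h : jump p x = maxJump x - 1) : p x < p z := by
  obtain ⟨w, hw, hpw⟩ := hp.exists_eq_leftLim hzx
  have := hp.anti hz hw.1.le
  simp only [jump, maxJump, if_neg (hz.trans_lt hzx).not_ge] at h
  omega

theorem one_le_of_jump (hp : IsRealPyramid p) (hx : jump p x = maxJump x)
    (hy : jump p y = maxJump y - 1) (hz : z ∈ Ico x y) : 1 ≤ p z := by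
  rcases le_or_gt z 0 with h0 | h0
  · have := hp.lt_of_jump_eq_maxJump (sub_one_lt x) (hz.1.trans h0) hx
    have := hp.mono hz.1 h0
    omega
  · have := hp.lt_of_jump_eq_maxJump_sub_one h0.le hz.2 hy
    omega

theorem comp_ind (hp : IsRealPyramid p) (op : ℕ → ℕ → ℕ) (hop : op 0 0 = 0)
    (hmono : ∀ ⦃z w⦄, z ≤ w → w ≤ 0 → op (p z) (ind x y z) ≤ op (p w) (ind x y w))
    (hanti : ∀ ⦃z w⦄, 0 ≤ z → z ≤ w → op (p w) (ind x y w) ≤ op (p z) (ind x y z))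
    (hjump : ∀ w, jump (fun z => op (p z) (ind x y z)) w = maxJump w ∨
      jump (fun z => op (p z) (ind x y z)) w = maxJump w - 1) :
    IsRealPyramid fun z => op (p z) (ind x y z) := by
  obtain ⟨⟨M, hM⟩, -, -, -, hrc, hfin, -⟩ := hp
  refine ⟨⟨max M (|x| + |y| + 1), fun z hz => ?_⟩, fun z => ?_, hmono, hanti,
    fun z => continuousWithinAt_comp₂ (hrc z) (continuousWithinAt_ind x y z) op,
    finite_discontinuities_comp₂ hfin (finite_discontinuities_ind x y) op, fun w => ?_⟩
  · simp only [hM z ((le_max_left _ _).trans hz),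
      ind_eq_zero_of_abs_ge ((le_max_right _ _).trans hz), hop]
  · rcases le_total z 0 with h | h
    · exact hmono h le_rfl
    · exact hanti le_rfl h
  · have := hjump w
    unfold jump maxJump at this
    rw [abs_le]
    split_ifs at this <;> omega

end IsRealPyramid

section AddRemove

variable {p : ℝ → ℕ} {x y : ℝ}

theorem sub_ind_add_ind (hpos : ∀ z ∈ Ico x y, 1 ≤ p z) :
    (fun z => p z - ind x y z + ind x y z) = p := by
  funext z
  by_cases hz : z ∈ Ico x y
  · simp only [ind, indicator_of_mem hz]
    have := hpos z hz
    omega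
  · simp [ind, indicator_of_notMem hz]

theorem jump_add_ind (hp : IsRealPyramid p) (hxy : x < y) (w : ℝ) :
    jump (fun z => p z + ind x y z) w =
      jump p w + ((if w = x then 1 else 0) - if w = y then 1 else 0) := by
  rw [jump_add hp.finite_discontinuities (finite_discontinuities_ind x y), jump_ind hxy]

theorem jump_sub_ind (hp : IsRealPyramid p) (hxy : x < y) (hpos : ∀ z ∈ Ico x y, 1 ≤ p z)
    (w : ℝ) : jump (fun z => p z - ind x y z) w =
      jump p w - ((if w = x then 1 else 0) - if w = y then 1 else 0) := by
  have := jump_add (finite_discontinuities_comp₂ hp.finite_discontinuities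
    (finite_discontinuities_ind x y) (· - ·)) (finite_discontinuities_ind x y) w
  rw [sub_ind_add_ind hpos, jump_ind hxy] at this
  linarith

theorem addable_iff (hp : IsRealPyramid p) (hxy : x < y) :
    Addable p x y ↔ jump p x = maxJump x - 1 ∧ jump p y = maxJump y := by
  have hj := jump_add_ind hp hxy
  constructor
  · intro hq
    have hqx := hq.jump_eq_maxJump_or x
    have hqy := hq.jump_eq_maxJump_or y
    have := hp.jump_eq_maxJump_or x
    have := hp.jump_eq_maxJump_or y
    simp only [hj, if_pos, if_neg hxy.ne, if_neg hxy.ne'] at hqx hqy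
    omega
  · rintro ⟨hx, hy⟩
    refine hp.comp_ind (· + ·) rfl (fun z w hzw hw => ?_) (fun z w hz hzw => ?_)
      fun w => ?_
    · have := hp.mono hzw hw
      rcases ind_le_ind_or (a := x) (b := y) hzw with h | ⟨hz, hyw⟩
      · omega
      · have := hp.lt_of_jump_eq_maxJump hz.2 (hyw.trans hw) hy
        have := hp.mono hyw hw
        have := ind_le_one x y z
        omega
    · have := hp.anti hz hzw
      rcases ind_le_ind_or' (a := x) (b := y) hzw with h | ⟨hzx, hw⟩
      · omega
      · have := hp.lt_of_jump_eq_maxJump_sub_one hz hzx hx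
        have := hp.anti (hz.trans hzx.le) hw.1
        have := ind_le_one x y w
        omega
    · rw [hj]
      by_cases hwx : w = x
      · subst hwx; simp [hxy.ne, hx]
      by_cases hwy : w = y
      · subst hwy; simp [hxy.ne', hy, sub_eq_add_neg]
      simpa [hwx, hwy] using hp.jump_eq_maxJump_or w

theorem removable_iff (hp : IsRealPyramid p) (hxy : x < y) :
    Removable p x y ↔ jump p x = maxJump x ∧ jump p y = maxJump y - 1 := by
  constructor
  · rintro ⟨hpos, hq⟩
    have hqx := hq.jump_eq_maxJump_or x
    have hqy := hq.jump_eq_maxJump_or y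
    have := hp.jump_eq_maxJump_or x
    have := hp.jump_eq_maxJump_or y
    simp only [jump_sub_ind hp hxy hpos, if_pos, if_neg hxy.ne, if_neg hxy.ne'] at hqx hqy
    omega
  · rintro ⟨hx, hy⟩
    have hpos : ∀ z ∈ Ico x y, 1 ≤ p z := fun z hz => hp.one_le_of_jump hx hy hz
    refine ⟨hpos, hp.comp_ind (· - ·) rfl (fun z w hzw hw => ?_)
      (fun z w hz hzw => ?_) fun w => ?_⟩
    · have := hp.mono hzw hw
      rcases ind_le_ind_or' (a := x) (b := y) hzw with h | ⟨hzx, hw'⟩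
      · omega
      · have := hp.lt_of_jump_eq_maxJump hzx (hw'.1.trans hw) hx
        have := hp.mono hw'.1 hw
        have := ind_le_one x y w
        omega
    · have := hp.anti hz hzw
      rcases ind_le_ind_or (a := x) (b := y) hzw with h | ⟨hz', hyw⟩
      · omega
      · have := hp.lt_of_jump_eq_maxJump_sub_one hz hz'.2 hy
        have := hp.anti (hz.trans (hz'.2.le)) hyw
        have := ind_le_one x y z
        omega
    · rw [jump_sub_ind hp hxy hpos]
      by_cases hwx : w = x
      · subst hwx; simp [hxy.ne, hx]
      by_cases hwy : w = y
      · subst hwy; simp [hxy.ne', hy, sub_eq_add_neg]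
      simpa [hwx, hwy] using hp.jump_eq_maxJump_or w

end AddRemove

section Join

variable {p : ℝ → ℕ} {a b c : ℝ}

theorem addable_left_then_right_iff (hp : IsRealPyramid p) (hab : a < b) (hbc : b < c) :
    Addable p a b ∧ Addable (fun z => p z + ind a b z) b c ↔
      Addable p a c ∧ jump p b = maxJump b := by
  have key (h : Addable p a b) : Addable (fun z => p z + ind a b z) b c ↔
      jump p b - 1 = maxJump b - 1 ∧ jump p c = maxJump c := by
    simp [addable_iff h hbc, jump_add_ind hp hab, hab.ne', (hab.trans hbc).ne', hbc.ne',
      sub_eq_add_neg]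
  rw [and_congr_right key, addable_iff hp hab, addable_iff hp (hab.trans hbc)]
  omega

theorem addable_right_then_left_iff (hp : IsRealPyramid p) (hab : a < b) (hbc : b < c) :
    Addable p b c ∧ Addable (fun z => p z + ind b c z) a b ↔
      Addable p a c ∧ jump p b = maxJump b - 1 := by
  have key (h : Addable p b c) : Addable (fun z => p z + ind b c z) a b ↔
      jump p a = maxJump a - 1 ∧ jump p b + 1 = maxJump b := by
    simp [addable_iff h hab, jump_add_ind hp hbc, hab.ne, (hab.trans hbc).ne, hbc.ne]
  rw [and_congr_right key, addable_iff hp hbc, addable_iff hp (hab.trans hbc)]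
  omega

theorem removable_right_then_left_iff (hp : IsRealPyramid p) (hab : a < b) (hbc : b < c) :
    Removable p b c ∧ Removable (fun z => p z - ind b c z) a b ↔
      Removable p a c ∧ jump p b = maxJump b := by
  have key (h : Removable p b c) : Removable (fun z => p z - ind b c z) a b ↔
      jump p a = maxJump a ∧ jump p b - 1 = maxJump b - 1 := by
    simp [removable_iff h.2 hab, jump_sub_ind hp hbc h.1, hab.ne, (hab.trans hbc).ne, hbc.ne]
  rw [and_congr_right key, removable_iff hp hbc, removable_iff hp (hab.trans hbc)]
  omega

theorem removable_left_then_right_iff (hp : IsRealPyramid p) (hab : a < b) (hbc : b < c) :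
    Removable p a b ∧ Removable (fun z => p z - ind a b z) b c ↔
      Removable p a c ∧ jump p b = maxJump b - 1 := by
  have key (h : Removable p a b) : Removable (fun z => p z - ind a b z) b c ↔
      jump p b + 1 = maxJump b ∧ jump p c = maxJump c - 1 := by
    simp [removable_iff h.2 hbc, jump_sub_ind hp hab h.1, hab.ne', (hab.trans hbc).ne',
      hbc.ne']
  rw [and_congr_right key, removable_iff hp hab, removable_iff hp (hab.trans hbc)]
  omega

end Join

def eCoeff (n : ℤ) : K := -tK * (-vK) ^ n

def fCoeff (n : ℤ) : K := tK * (-vK) ^ n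

theorem tK_ne_zero : tK ≠ 0 := RatFunc.X_ne_zero

theorem neg_vK_ne_zero : -vK ≠ 0 := neg_ne_zero.mpr (pow_ne_zero 2 tK_ne_zero)

theorem tK_mul_eCoeff_mul (m n : ℤ) : tK * (eCoeff m * eCoeff n) = eCoeff (m + n + 1) := by
  simp only [eCoeff, zpow_add_one₀ neg_vK_ne_zero, zpow_add₀ neg_vK_ne_zero]
  unfold vK
  ring

theorem tK_inv_mul_eCoeff_mul (m n : ℤ) : tK⁻¹ * (eCoeff m * eCoeff n) = -eCoeff (m + n) := by
  simp only [eCoeff, zpow_add₀ neg_vK_ne_zero]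
  field_simp

theorem tK_inv_mul_fCoeff_mul (m n : ℤ) : tK⁻¹ * (fCoeff m * fCoeff n) = fCoeff (m + n) := by
  simp only [fCoeff, zpow_add₀ neg_vK_ne_zero]
  field_simp

theorem tK_mul_fCoeff_mul (m n : ℤ) : tK * (fCoeff m * fCoeff n) = -fCoeff (m + n + 1) := by
  simp only [fCoeff, zpow_add_one₀ neg_vK_ne_zero, zpow_add₀ neg_vK_ne_zero]
  unfold vK
  ring

section Vectors

variable {a b c d : ℝ} {P : Pyr}

theorem Evec_of_removable (h : Removable P.1 a b) :
    Evec a b P = Finsupp.single ⟨fun z => P.1 z - ind a b z, h.2⟩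
      (eCoeff ((P.1 b : ℤ) - P.1 a)) :=
  dif_pos h

theorem Evec_of_not_removable (h : ¬ Removable P.1 a b) : Evec a b P = 0 :=
  dif_neg h

theorem Fvec_of_addable (h : Addable P.1 a b) :
    Fvec a b P = Finsupp.single ⟨fun z => P.1 z + ind a b z, h⟩
      (fCoeff ((P.1 a : ℤ) - P.1 b)) :=
  dif_pos h

theorem Fvec_of_not_addable (h : ¬ Addable P.1 a b) : Fvec a b P = 0 :=
  dif_neg h

theorem Eop_single (a b : ℝ) (P : Pyr) (k : K) :
    Eop a b (Finsupp.single P k) = k • Evec a b P := by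
  rw [Eop, Finsupp.lsum_single, LinearMap.toSpanSingleton_apply]

theorem Fop_single (a b : ℝ) (P : Pyr) (k : K) :
    Fop a b (Finsupp.single P k) = k • Fvec a b P := by
  rw [Fop, Finsupp.lsum_single, LinearMap.toSpanSingleton_apply]

theorem Eop_Evec_of_removable (a b : ℝ) (h : Removable P.1 c d) :
    Eop a b (Evec c d P) =
      eCoeff ((P.1 d : ℤ) - P.1 c) • Evec a b ⟨fun z => P.1 z - ind c d z, h.2⟩ := by
  rw [Evec_of_removable h]
  exact Eop_single ..

theorem Fop_Fvec_of_addable (a b : ℝ) (h : Addable P.1 c d) :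
    Fop a b (Fvec c d P) =
      fCoeff ((P.1 c : ℤ) - P.1 d) • Fvec a b ⟨fun z => P.1 z + ind c d z, h⟩ := by
  rw [Fvec_of_addable h]
  exact Fop_single ..

end Vectors

section JoinVectors

variable {a b c : ℝ}

theorem Evec_join_of_jump_eq_maxJump (P : Pyr) (hab : a < b) (hbc : b < c)
    (hac : Removable P.1 a c) (hb : jump P.1 b = maxJump b) :
    Evec a c P = tK • Eop a b (Evec b c P) - tK⁻¹ • Eop b c (Evec a b P) := by
  obtain ⟨hbc', hab'⟩ := (removable_right_then_left_iff P.2 hab hbc).mpr ⟨hac, hb⟩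
  have hnot : ¬ Removable P.1 a b := fun h => by
    have := ((removable_iff P.2 hab).mp h).2
    omega
  rw [Evec_of_not_removable hnot, map_zero, smul_zero, sub_zero, Eop_Evec_of_removable a b hbc',
    Evec_of_removable (P := ⟨_, hbc'.2⟩) hab', Evec_of_removable hac, smul_smul]
  -- `rw [Finsupp.smul_single]` fails: the indices `⟨_, _⟩` are typed `{p // _}`, not `Pyr`.
  refine (congrArg₂ Finsupp.single ?_ ?_).trans (Finsupp.smul_single _ _ _).symm
  · exact Subtype.ext <| funext fun z => by
      simp only [← ind_add_ind hab.le hbc.le z]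
      omega
  · have := hac.1 b ⟨hab.le, hbc⟩
    rw [smul_eq_mul, mul_assoc, tK_mul_eCoeff_mul]
    simp only [ind_self_left hbc, ind_of_lt hab]
    congr 1
    omega

theorem Evec_join_of_jump_eq_maxJump_sub_one (P : Pyr) (hab : a < b) (hbc : b < c)
    (hac : Removable P.1 a c) (hb : jump P.1 b = maxJump b - 1) :
    Evec a c P = tK • Eop a b (Evec b c P) - tK⁻¹ • Eop b c (Evec a b P) := by
  obtain ⟨hab', hbc'⟩ := (removable_left_then_right_iff P.2 hab hbc).mpr ⟨hac, hb⟩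
  have hnot : ¬ Removable P.1 b c := fun h => by
    have := ((removable_iff P.2 hbc).mp h).1
    omega
  rw [Evec_of_not_removable hnot, map_zero, smul_zero, zero_sub, Eop_Evec_of_removable b c hab',
    Evec_of_removable (P := ⟨_, hab'.2⟩) hbc', Evec_of_removable hac, smul_smul, ← neg_smul]
  refine (congrArg₂ Finsupp.single ?_ ?_).trans (Finsupp.smul_single _ _ _).symm
  · exact Subtype.ext <| funext fun z => by
      simp only [← ind_add_ind hab.le hbc.le z]
      omega
  · rw [smul_eq_mul, neg_mul, mul_assoc, tK_inv_mul_eCoeff_mul, neg_neg]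
    simp only [ind_self_right, ind_of_le hbc.le]
    congr 1
    omega

theorem Fvec_join_of_jump_eq_maxJump (P : Pyr) (hab : a < b) (hbc : b < c)
    (hac : Addable P.1 a c) (hb : jump P.1 b = maxJump b) :
    Fvec a c P = tK⁻¹ • Fop b c (Fvec a b P) - tK • Fop a b (Fvec b c P) := by
  obtain ⟨hab', hbc'⟩ := (addable_left_then_right_iff P.2 hab hbc).mpr ⟨hac, hb⟩
  have hnot : ¬ Addable P.1 b c := fun h => by
    have := ((addable_iff P.2 hbc).mp h).1
    omega
  rw [Fvec_of_not_addable hnot, map_zero, smul_zero, sub_zero, Fop_Fvec_of_addable b c hab',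
    Fvec_of_addable (P := ⟨_, hab'⟩) hbc', Fvec_of_addable hac, smul_smul]
  refine (congrArg₂ Finsupp.single ?_ ?_).trans (Finsupp.smul_single _ _ _).symm
  · exact Subtype.ext <| funext fun z => by
      simp only [← ind_add_ind hab.le hbc.le z]
      omega
  · rw [smul_eq_mul, mul_assoc, tK_inv_mul_fCoeff_mul]
    simp only [ind_self_right, ind_of_le hbc.le]
    congr 1
    omega

theorem Fvec_join_of_jump_eq_maxJump_sub_one (P : Pyr) (hab : a < b) (hbc : b < c)
    (hac : Addable P.1 a c) (hb : jump P.1 b = maxJump b - 1) :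
    Fvec a c P = tK⁻¹ • Fop b c (Fvec a b P) - tK • Fop a b (Fvec b c P) := by
  obtain ⟨hbc', hab'⟩ := (addable_right_then_left_iff P.2 hab hbc).mpr ⟨hac, hb⟩
  have hnot : ¬ Addable P.1 a b := fun h => by
    have := ((addable_iff P.2 hab).mp h).2
    omega
  rw [Fvec_of_not_addable hnot, map_zero, smul_zero, zero_sub, Fop_Fvec_of_addable a b hbc',
    Fvec_of_addable (P := ⟨_, hbc'⟩) hab', Fvec_of_addable hac, smul_smul, ← neg_smul]
  refine (congrArg₂ Finsupp.single ?_ ?_).trans (Finsupp.smul_single _ _ _).symm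
  · exact Subtype.ext <| funext fun z => by
      simp only [← ind_add_ind hab.le hbc.le z]
      omega
  · rw [smul_eq_mul, neg_mul, mul_assoc, tK_mul_fCoeff_mul, neg_neg]
    simp only [ind_self_left hbc, ind_of_lt hab]
    congr 1
    omega

theorem Evec_join (hab : a < b) (hbc : b < c) (P : Pyr) :
    Evec a c P = tK • Eop a b (Evec b c P) - tK⁻¹ • Eop b c (Evec a b P) := by
  by_cases hac : Removable P.1 a c
  · rcases P.2.jump_eq_maxJump_or b with hb | hb
    · exact Evec_join_of_jump_eq_maxJump P hab hbc hac hb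
    · exact Evec_join_of_jump_eq_maxJump_sub_one P hab hbc hac hb
  have hbc_ab : Eop a b (Evec b c P) = 0 := by
    by_cases hbc' : Removable P.1 b c
    · rw [Eop_Evec_of_removable a b hbc', Evec_of_not_removable (P := ⟨_, hbc'.2⟩)
        fun hab' => hac ((removable_right_then_left_iff P.2 hab hbc).mp ⟨hbc', hab'⟩).1,
        smul_zero]
    · rw [Evec_of_not_removable hbc', map_zero]
  have hab_bc : Eop b c (Evec a b P) = 0 := by
    by_cases hab' : Removable P.1 a b
    · rw [Eop_Evec_of_removable b c hab', Evec_of_not_removable (P := ⟨_, hab'.2⟩)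
        fun hbc' => hac ((removable_left_then_right_iff P.2 hab hbc).mp ⟨hab', hbc'⟩).1,
        smul_zero]
    · rw [Evec_of_not_removable hab', map_zero]
  rw [Evec_of_not_removable hac, hbc_ab, hab_bc, smul_zero, smul_zero, sub_zero]

theorem Fvec_join (hab : a < b) (hbc : b < c) (P : Pyr) :
    Fvec a c P = tK⁻¹ • Fop b c (Fvec a b P) - tK • Fop a b (Fvec b c P) := by
  by_cases hac : Addable P.1 a c
  · rcases P.2.jump_eq_maxJump_or b with hb | hb
    · exact Fvec_join_of_jump_eq_maxJump P hab hbc hac hb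
    · exact Fvec_join_of_jump_eq_maxJump_sub_one P hab hbc hac hb
  have hab_bc : Fop b c (Fvec a b P) = 0 := by
    by_cases hab' : Addable P.1 a b
    · rw [Fop_Fvec_of_addable b c hab', Fvec_of_not_addable (P := ⟨_, hab'⟩)
        fun hbc' => hac ((addable_left_then_right_iff P.2 hab hbc).mp ⟨hab', hbc'⟩).1,
        smul_zero]
    · rw [Fvec_of_not_addable hab', map_zero]
  have hbc_ab : Fop a b (Fvec b c P) = 0 := by
    by_cases hbc' : Addable P.1 b c
    · rw [Fop_Fvec_of_addable a b hbc', Fvec_of_not_addable (P := ⟨_, hbc'⟩)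
        fun hab' => hac ((addable_right_then_left_iff P.2 hab hbc).mp ⟨hbc', hab'⟩).1,
        smul_zero]
    · rw [Fvec_of_not_addable hbc', map_zero]
  rw [Fvec_of_not_addable hac, hab_bc, hbc_ab, smul_zero, smul_zero, sub_zero]

end JoinVectors

/-- the join relations
`E_{[a,c)} = t·E_{[a,b)}∘E_{[b,c)} − t⁻¹·E_{[b,c)}∘E_{[a,b)}` and
`F_{[a,c)} = t⁻¹·F_{[b,c)}∘F_{[a,b)} − t·F_{[a,b)}∘F_{[b,c)}` hold on the Fock space. -/
theorem fock_join_relations (a b c : ℝ) (hab : a < b) (hbc : b < c) :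
    Eop a c = tK • (Eop a b ∘ₗ Eop b c) - tK⁻¹ • (Eop b c ∘ₗ Eop a b) ∧
    Fop a c = tK⁻¹ • (Fop b c ∘ₗ Fop a b) - tK • (Fop a b ∘ₗ Fop b c) := by
  refine ⟨Finsupp.lhom_ext fun P k => ?_, Finsupp.lhom_ext fun P k => ?_⟩
  · simp only [LinearMap.sub_apply, LinearMap.smul_apply, LinearMap.comp_apply, Eop_single,
      map_smul, Evec_join hab hbc P, smul_sub, smul_comm k]
  · simp only [LinearMap.sub_apply, LinearMap.smul_apply, LinearMap.comp_apply, Fop_single,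
      map_smul, Fvec_join hab hbc P, smul_sub, smul_comm k]
end
end

section
/- Let F be a field, v ∈ F a nonzero element, c a positive natural number, and let {1, 2, …, c} = A ⊔ R be a partition into two disjoint subsets. For h ∈ {1, …, c} set s(h) := (|A ∩ {h+1,…,c}| − |R ∩ {h+1,…,c}|) − (|A ∩ {1,…,h−1}| − |R ∩ {1,…,h−1}|) ∈ ℤ. Then (v − v⁻¹)·( Σ_{h∈A} v^{s(h)} − Σ_{h∈R} v^{s(h)} ) = v^{|A|−|R|} − v^{|R|−|A|}, where v^k for k ∈ ℤ denotes the k-th integer power of v in F. -/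
/-!
With `t n = |A ∩ [1, n]| - |R ∩ [1, n]|` and `N = t c = |A| - |R|`, the exponent is
`s h = N - t h - t (h - 1)`, and `t h = t (h - 1) ± 1` according as `h ∈ A` or `h ∈ R`.
Hence, with `g n = v ^ (N - 2 t n)`, the term `(v - v⁻¹) v ^ s h` is `g (h - 1) - g h` for
`h ∈ A` and its negative for `h ∈ R`, so the signed sum telescopes to `g 0 - g c = v ^ N - v ^ (-N)`.
-/

/-- The exponent `s(h)` associated with a partition `{1,…,c} = A ⊔ R`:
`(|A ∩ {h+1,…,c}| − |R ∩ {h+1,…,c}|) − (|A ∩ {1,…,h−1}| − |R ∩ {1,…,h−1}|)`. -/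
def sExp (A R : Finset ℕ) (c h : ℕ) : ℤ :=
  (((A ∩ Finset.Icc (h + 1) c).card : ℤ) - ((R ∩ Finset.Icc (h + 1) c).card : ℤ)) -
    (((A ∩ Finset.Icc 1 (h - 1)).card : ℤ) - ((R ∩ Finset.Icc 1 (h - 1)).card : ℤ))

open Finset

lemma sub_inv_mul_zpow_sub_one {F : Type*} [Field F] {v : F} (hv : v ≠ 0) (a : ℤ) :
    (v - v⁻¹) * v ^ (a - 1) = v ^ a - v ^ (a - 2) := by
  rw [sub_mul, ← zpow_one_add₀ hv, ← zpow_neg_one, ← zpow_add₀ hv]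
  ring_nf

lemma sum_Icc_one_telescope {M : Type*} [AddCommGroup M] (f : ℕ → M) (n : ℕ) :
    ∑ h ∈ Icc 1 n, (f (h - 1) - f h) = f 0 - f n := by
  induction n with
  | zero => simp
  | succ n ih => rw [sum_Icc_succ_top (by omega), ih, Nat.add_sub_cancel]; abel

lemma card_inter_Icc_add_card_inter_Icc {S : Finset ℕ} {c h : ℕ} (hS : S ⊆ Icc 1 c)
    (hh : h ≤ c) : #(S ∩ Icc 1 h) + #(S ∩ Icc (h + 1) c) = #S := by
  have hsplit : Icc 1 h ∪ Icc (h + 1) c = Icc 1 c := by ext; simp; omega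
  rw [← card_union_of_disjoint, ← inter_union_distrib_left, hsplit, inter_eq_left.2 hS]
  exact disjoint_left.2 fun x hx hx' => by simp at hx hx'; omega

lemma card_inter_Icc_one_succ (S : Finset ℕ) (n : ℕ) :
    #(S ∩ Icc 1 (n + 1)) = #(S ∩ Icc 1 n) + if n + 1 ∈ S then 1 else 0 := by
  have hIcc : Icc 1 (n + 1) = insert (n + 1) (Icc 1 n) := by ext; simp; omega
  split_ifs with hn
  · rw [hIcc, inter_insert_of_mem hn, card_insert_of_notMem (by simp)]
  · rw [hIcc, inter_insert_of_notMem hn, add_zero]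

def prefixBalance (A R : Finset ℕ) (n : ℕ) : ℤ := #(A ∩ Icc 1 n) - #(R ∩ Icc 1 n)

section Balance

variable {A R : Finset ℕ}

@[simp] lemma prefixBalance_zero : prefixBalance A R 0 = 0 := by simp [prefixBalance]

lemma prefixBalance_of_subset {c : ℕ} (hA : A ⊆ Icc 1 c) (hR : R ⊆ Icc 1 c) :
    prefixBalance A R c = #A - #R := by
  rw [prefixBalance, inter_eq_left.2 hA, inter_eq_left.2 hR]

lemma prefixBalance_succ (n : ℕ) :
    prefixBalance A R (n + 1) =
      prefixBalance A R n + (if n + 1 ∈ A then 1 else 0) - (if n + 1 ∈ R then 1 else 0) := by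
  simp only [prefixBalance, card_inter_Icc_one_succ]
  push_cast
  ring

lemma sExp_eq_prefixBalance {c h : ℕ} (hA : A ⊆ Icc 1 c) (hR : R ⊆ Icc 1 c) (hh : h ≤ c) :
    sExp A R c h = prefixBalance A R c - prefixBalance A R h - prefixBalance A R (h - 1) := by
  have hA' := card_inter_Icc_add_card_inter_Icc hA hh
  have hR' := card_inter_Icc_add_card_inter_Icc hR hh
  rw [sExp, prefixBalance_of_subset hA hR]
  simp only [prefixBalance]
  omega

variable {F : Type*} [Field F] {v : F} {c h : ℕ}

lemma sub_inv_mul_zpow_sExp_of_mem_left (hv : v ≠ 0) (hA : A ⊆ Icc 1 c) (hR : R ⊆ Icc 1 c)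
    (hdisj : Disjoint A R) (hhA : h ∈ A) :
    (v - v⁻¹) * v ^ sExp A R c h =
      v ^ (prefixBalance A R c - 2 * prefixBalance A R (h - 1)) -
        v ^ (prefixBalance A R c - 2 * prefixBalance A R h) := by
  obtain ⟨hh1, hhc⟩ := mem_Icc.1 (hA hhA)
  obtain ⟨n, rfl⟩ := Nat.exists_eq_add_of_le' hh1
  have hsucc := prefixBalance_succ (A := A) (R := R) n
  rw [if_pos hhA, if_neg (disjoint_left.1 hdisj hhA)] at hsucc
  rw [sExp_eq_prefixBalance hA hR hhc, Nat.add_sub_cancel, hsucc]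
  convert sub_inv_mul_zpow_sub_one hv (prefixBalance A R c - 2 * prefixBalance A R n) using 3 <;>
    ring

lemma sub_inv_mul_zpow_sExp_of_mem_right (hv : v ≠ 0) (hA : A ⊆ Icc 1 c) (hR : R ⊆ Icc 1 c)
    (hdisj : Disjoint A R) (hhR : h ∈ R) :
    (v - v⁻¹) * v ^ sExp A R c h =
      v ^ (prefixBalance A R c - 2 * prefixBalance A R h) -
        v ^ (prefixBalance A R c - 2 * prefixBalance A R (h - 1)) := by
  obtain ⟨hh1, hhc⟩ := mem_Icc.1 (hR hhR)
  obtain ⟨n, rfl⟩ := Nat.exists_eq_add_of_le' hh1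
  have hsucc := prefixBalance_succ (A := A) (R := R) n
  rw [if_neg (disjoint_right.1 hdisj hhR), if_pos hhR] at hsucc
  rw [sExp_eq_prefixBalance hA hR hhc, Nat.add_sub_cancel, hsucc]
  convert sub_inv_mul_zpow_sub_one hv (prefixBalance A R c - 2 * prefixBalance A R n + 2)
    using 3 <;> ring

end Balance

theorem combinatorial_identity_general {F : Type*} [Field F] (v : F) (hv : v ≠ 0)
    (c : ℕ) (A R : Finset ℕ)
    (hdisj : Disjoint A R) (hunion : A ∪ R = Finset.Icc 1 c) :
    (v - v⁻¹) * ((∑ h ∈ A, v ^ sExp A R c h) - ∑ h ∈ R, v ^ sExp A R c h) =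
      v ^ ((A.card : ℤ) - (R.card : ℤ)) - v ^ ((R.card : ℤ) - (A.card : ℤ)) := by
  have hA : A ⊆ Icc 1 c := hunion ▸ subset_union_left
  have hR : R ⊆ Icc 1 c := hunion ▸ subset_union_right
  set g : ℕ → F := fun n => v ^ (prefixBalance A R c - 2 * prefixBalance A R n)
  calc (v - v⁻¹) * ((∑ h ∈ A, v ^ sExp A R c h) - ∑ h ∈ R, v ^ sExp A R c h)
      = ∑ h ∈ A ∪ R, (g (h - 1) - g h) := by
        rw [mul_sub, mul_sum, mul_sum, sum_union hdisj,
          sum_congr rfl fun h => sub_inv_mul_zpow_sExp_of_mem_left hv hA hR hdisj,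
          sum_congr rfl fun h => sub_inv_mul_zpow_sExp_of_mem_right hv hA hR hdisj]
        simp only [g, sum_sub_distrib]
        ring
    _ = g 0 - g c := by rw [hunion, sum_Icc_one_telescope]
    _ = _ := by simp only [g, prefixBalance_zero, prefixBalance_of_subset hA hR]; ring_nf

/-- for a field `F`, `v ≠ 0`, `c > 0`, and a partition
`{1,…,c} = A ⊔ R`, one has
`(v − v⁻¹)·(Σ_{h∈A} v^{s(h)} − Σ_{h∈R} v^{s(h)}) = v^{|A|−|R|} − v^{|R|−|A|}`. -/
theorem combinatorial_identity {F : Type*} [Field F] (v : F) (hv : v ≠ 0)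
    (c : ℕ) (hc : 0 < c) (A R : Finset ℕ)
    (hdisj : Disjoint A R) (hunion : A ∪ R = Finset.Icc 1 c) :
    (v - v⁻¹) * ((∑ h ∈ A, v ^ sExp A R c h) - ∑ h ∈ R, v ^ sExp A R c h) =
      v ^ ((A.card : ℤ) - (R.card : ℤ)) - v ^ ((R.card : ℤ) - (A.card : ℤ)) :=
  combinatorial_identity_general v hv c A R hdisj hunion
end
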